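/- (Theorem 1, non-decreasing part.) Under any csmGmm, for every dimension k ∈ {1,...,K} and every choice of the remaining coordinates, the local false discovery rate is non-decreasing in the k-th coordinate on the non-positive half-line: if z, z' ∈ ℝ^K satisfy z_{k'} = z'_{k'} for all k' ≠ k and z_k ≤ z'_k ≤ 0, then lfdr(z) ≤ lfdr(z'). -/
import Mathlib


noncomputable section

open Finset

/-- The standard normal density `φ(x) = (2π)^{-1/2} exp(-x²/2)`. -/
def stdNormal (x : ℝ) : ℝ := (Real.sqrt (2 * Real.pi))⁻¹ * Real.exp (-(x ^ 2) / 2)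

/-- Sign value encoded by a ternary digit: `0 ↦ -1`, `1 ↦ 0`, `2 ↦ 1`. -/
def sgnVal (i : Fin 3) : ℝ := (i : ℝ) - 1

/-- The non-null pattern (binary representation) of an association configuration:
`pat h k = true` iff dimension `k` is non-null. -/
def pat {K : ℕ} (h : Fin K → Fin 3) : Fin K → Bool := fun k => h k != 1

/-- A conditionally symmetric multidimensional Gaussian mixture model (csmGmm).
Parameters are indexed by the non-null pattern `β : Fin K → Bool`, which is
equivalent to the binary representation `b ∈ {0,…,2^K - 1}`; the all-`true`
pattern corresponds to `b = 2^K - 1`. -/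
structure CsmGmm (K : ℕ) where
  /-- number of mean-magnitude vectors for each binary representation -/
  M : (Fin K → Bool) → ℕ
  M_pos : ∀ β, 1 ≤ M β
  /-- mixing proportions, shared by configurations with the same binary representation -/
  pi : (β : Fin K → Bool) → Fin (M β) → ℝ
  pi_pos : ∀ β m, 0 < pi β m
  pi_sum : ∑ h : Fin K → Fin 3, ∑ m : Fin (M (pat h)), pi (pat h) m = 1
  /-- mean magnitudes -/
  mu : (β : Fin K → Bool) → Fin (M β) → Fin K → ℝ
  mu_null : ∀ β m k, β k = false → mu β m k = 0
  mu_pos : ∀ β m k, β k = true → 0 < mu β m k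
  mu_alt : ∀ β (m' : Fin (M β)) (m : Fin (M (fun _ => true))) k,
    β ≠ (fun _ => true) → β k = true → mu β m' k ≤ mu (fun _ => true) m k

namespace CsmGmm

variable {K : ℕ}

/-- The numerator `N(z)`: mixture mass over composite-null configurations
(those with at least one null dimension, i.e. some `h k = 0`, encoded by digit `1`). -/
def N (G : CsmGmm K) (z : Fin K → ℝ) : ℝ :=
  ∑ h ∈ Finset.univ.filter (fun h : Fin K → Fin 3 => ∃ k, h k = 1),
    ∑ m : Fin (G.M (pat h)),
      G.pi (pat h) m * ∏ k, stdNormal (z k - sgnVal (h k) * G.mu (pat h) m k)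

/-- The denominator `D(z)`: the full mixture density. -/
def D (G : CsmGmm K) (z : Fin K → ℝ) : ℝ :=
  ∑ h : Fin K → Fin 3,
    ∑ m : Fin (G.M (pat h)),
      G.pi (pat h) m * ∏ k, stdNormal (z k - sgnVal (h k) * G.mu (pat h) m k)

/-- The local false discovery rate `lfdr(z) = N(z)/D(z)`. -/
def lfdr (G : CsmGmm K) (z : Fin K → ℝ) : ℝ := G.N z / G.D z

end CsmGmm

end

/- ============ auxiliary machinery ============ -/

noncomputable section Aux

open Finset

lemma stdNormal_pos (x : ℝ) : 0 < stdNormal x := by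
  unfold stdNormal
  have h2 : (0:ℝ) < Real.sqrt (2 * Real.pi) := Real.sqrt_pos.mpr (by positivity)
  exact mul_pos (inv_pos.mpr h2) (Real.exp_pos _)

lemma cosh_mul_cosh_le {ν μ u u' : ℝ} (hsq : ν^2 ≤ μ^2) (hu' : 0 ≤ u') (huu : u' ≤ u) :
    Real.cosh (ν*u) * Real.cosh (μ*u') ≤ Real.cosh (ν*u') * Real.cosh (μ*u) := by
  have e1 : ∀ a b : ℝ, Real.cosh a * Real.cosh b
      = (Real.cosh (a+b) + Real.cosh (a-b)) / 2 := by
    intro a b; rw [Real.cosh_add, Real.cosh_sub]; ring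
  have habs : ∀ A B : ℝ, A^2 ≤ B^2 → Real.cosh A ≤ Real.cosh B := by
    intro A B hAB
    rw [Real.cosh_le_cosh]
    nlinarith [abs_nonneg A, abs_nonneg B, sq_abs A, sq_abs B]
  have huu2 : u'^2 ≤ u^2 := by nlinarith
  have hkey : (0:ℝ) ≤ (μ^2 - ν^2) * (u^2 - u'^2) :=
    mul_nonneg (by linarith) (by linarith)
  have h1 : Real.cosh (ν*u + μ*u') ≤ Real.cosh (ν*u' + μ*u) := by
    apply habs; nlinarith
  have h2 : Real.cosh (ν*u - μ*u') ≤ Real.cosh (ν*u' - μ*u) := by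
    apply habs; nlinarith
  rw [e1, e1]; linarith

lemma pair_eq (x a : ℝ) :
    stdNormal (x - a) + stdNormal (x + a)
      = 2 * (Real.sqrt (2*Real.pi))⁻¹ * Real.exp (-(x^2+a^2)/2) * Real.cosh (a*x) := by
  unfold stdNormal
  rw [Real.cosh_eq,
      show (-((x-a)^2)/2 : ℝ) = -(x^2+a^2)/2 + a*x by ring,
      show (-((x+a)^2)/2 : ℝ) = -(x^2+a^2)/2 + -(a*x) by ring,
      Real.exp_add, Real.exp_add]
  ring

lemma keyProd {a b x x' : ℝ} (hab : a^2 ≤ b^2) (hxx : x ≤ x') (hx0 : x' ≤ 0) :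
    (stdNormal (x - a) + stdNormal (x + a)) * (stdNormal (x' - b) + stdNormal (x' + b))
      ≤ (stdNormal (x' - a) + stdNormal (x' + a)) * (stdNormal (x - b) + stdNormal (x + b)) := by
  rw [pair_eq, pair_eq, pair_eq, pair_eq]
  have hc : Real.cosh (a*x) * Real.cosh (b*x') ≤ Real.cosh (a*x') * Real.cosh (b*x) := by
    have := cosh_mul_cosh_le (ν:=a) (μ:=b) (u:=-x) (u':=-x') hab (by linarith) (by linarith)
    simpa [mul_neg, Real.cosh_neg] using this
  have E : Real.exp (-(x^2+a^2)/2) * Real.exp (-(x'^2+b^2)/2)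
      = Real.exp (-(x'^2+a^2)/2) * Real.exp (-(x^2+b^2)/2) := by
    rw [← Real.exp_add, ← Real.exp_add]; ring_nf
  have hC : (0:ℝ) ≤ 4 * ((Real.sqrt (2*Real.pi))⁻¹)^2
      * (Real.exp (-(x^2+a^2)/2) * Real.exp (-(x'^2+b^2)/2)) := by positivity
  calc 2 * (Real.sqrt (2*Real.pi))⁻¹ * Real.exp (-(x^2+a^2)/2) * Real.cosh (a*x)
        * (2 * (Real.sqrt (2*Real.pi))⁻¹ * Real.exp (-(x'^2+b^2)/2) * Real.cosh (b*x'))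
      = (4 * ((Real.sqrt (2*Real.pi))⁻¹)^2
          * (Real.exp (-(x^2+a^2)/2) * Real.exp (-(x'^2+b^2)/2)))
        * (Real.cosh (a*x) * Real.cosh (b*x')) := by ring
    _ ≤ (4 * ((Real.sqrt (2*Real.pi))⁻¹)^2
          * (Real.exp (-(x^2+a^2)/2) * Real.exp (-(x'^2+b^2)/2)))
        * (Real.cosh (a*x') * Real.cosh (b*x)) := mul_le_mul_of_nonneg_left hc hC
    _ = _ := by rw [E]; ring

/-- flip the sign digit: `0 ↔ 2`, fixing `1`. -/
def flip3 : Fin 3 → Fin 3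
  | 0 => 2
  | 1 => 1
  | 2 => 0

lemma flip3_flip3 : ∀ i, flip3 (flip3 i) = i := by decide

lemma flip3_bne_one : ∀ i : Fin 3, (flip3 i != 1) = (i != 1) := by decide

lemma flip3_eq_one : ∀ i : Fin 3, flip3 i = 1 ↔ i = 1 := by decide

lemma sgnVal_flip3 : ∀ i, sgnVal (flip3 i) = - sgnVal i := by
  intro i
  fin_cases i <;> simp [sgnVal, flip3] <;> norm_num

lemma sgnVal_sq_le_one : ∀ i : Fin 3, sgnVal i ^ 2 ≤ 1 := by
  intro i; fin_cases i <;> simp [sgnVal] <;> norm_num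

lemma sgnVal_sq_eq_one : ∀ i : Fin 3, i ≠ 1 → sgnVal i ^ 2 = 1 := by
  intro i hi
  fin_cases i
  · norm_num [sgnVal]
  · exact absurd rfl hi
  · norm_num [sgnVal]

lemma sgnVal_one : sgnVal 1 = 0 := by norm_num [sgnVal]

variable {K : ℕ}

/-- flip the sign of the `k`-th coordinate of a configuration. -/
def Fk (k : Fin K) (h : Fin K → Fin 3) : Fin K → Fin 3 :=
  Function.update h k (flip3 (h k))

lemma Fk_self (k : Fin K) (h : Fin K → Fin 3) : Fk k h k = flip3 (h k) :=
  Function.update_self _ _ _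

lemma Fk_ne (k : Fin K) (h : Fin K → Fin 3) {j : Fin K} (hj : j ≠ k) : Fk k h j = h j :=
  Function.update_of_ne hj _ _

lemma Fk_invol (k : Fin K) (h : Fin K → Fin 3) : Fk k (Fk k h) = h := by
  funext j
  by_cases hj : j = k
  · subst hj; rw [Fk_self, Fk_self, flip3_flip3]
  · rw [Fk_ne _ _ hj, Fk_ne _ _ hj]

lemma pat_Fk (k : Fin K) (h : Fin K → Fin 3) : pat (Fk k h) = pat h := by
  funext j
  by_cases hj : j = k
  · subst hj; simp only [pat, Fk_self, flip3_bne_one]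
  · simp only [pat, Fk_ne _ _ hj]

lemma exists_one_Fk (k : Fin K) (h : Fin K → Fin 3) :
    (∃ j, Fk k h j = 1) ↔ (∃ j, h j = 1) := by
  constructor <;> rintro ⟨j, hj⟩ <;> refine ⟨j, ?_⟩
  · by_cases hjk : j = k
    · subst hjk; rw [Fk_self] at hj; exact (flip3_eq_one _).mp hj
    · rwa [Fk_ne _ _ hjk] at hj
  · by_cases hjk : j = k
    · subst hjk; rw [Fk_self, flip3_eq_one]; exact hj
    · rwa [Fk_ne _ _ hjk]

/-- one mixture component as a function of the pattern, with the configuration free -/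
def Tb (G : CsmGmm K) (w : Fin K → ℝ) (β : Fin K → Bool) (m : Fin (G.M β))
    (h : Fin K → Fin 3) : ℝ :=
  G.pi β m * ∏ j, stdNormal (w j - sgnVal (h j) * G.mu β m j)

def Cb (G : CsmGmm K) (k : Fin K) (z : Fin K → ℝ) (β : Fin K → Bool) (m : Fin (G.M β))
    (h : Fin K → Fin 3) : ℝ :=
  G.pi β m * ∏ j ∈ Finset.univ.erase k, stdNormal (z j - sgnVal (h j) * G.mu β m j)

def Pb (G : CsmGmm K) (k : Fin K) (β : Fin K → Bool) (m : Fin (G.M β))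
    (h : Fin K → Fin 3) (x : ℝ) : ℝ :=
  stdNormal (x - sgnVal (h k) * G.mu β m k) + stdNormal (x + sgnVal (h k) * G.mu β m k)

lemma Cb_nonneg (G : CsmGmm K) (k : Fin K) (z : Fin K → ℝ) (β : Fin K → Bool)
    (m : Fin (G.M β)) (h : Fin K → Fin 3) : 0 ≤ Cb G k z β m h :=
  mul_nonneg (G.pi_pos β m).le (Finset.prod_nonneg fun j _ => (stdNormal_pos _).le)

lemma reindex (G : CsmGmm K) (k : Fin K) (s : Finset (Fin K → Fin 3))
    (hs : ∀ h ∈ s, Fk k h ∈ s) (w : Fin K → ℝ) :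
    ∑ h ∈ s, ∑ m : Fin (G.M (pat h)), Tb G w (pat h) m h
      = ∑ h ∈ s, ∑ m : Fin (G.M (pat h)), Tb G w (pat h) m (Fk k h) := by
  refine Finset.sum_nbij' (i := fun h => Fk k h) (j := fun h => Fk k h)
    hs hs (fun h _ => Fk_invol k h) (fun h _ => Fk_invol k h) ?_
  intro h _
  rw [pat_Fk, Fk_invol]

lemma doubling (G : CsmGmm K) (k : Fin K) (z : Fin K → ℝ) (s : Finset (Fin K → Fin 3))
    (hs : ∀ h ∈ s, Fk k h ∈ s) (w : Fin K → ℝ) (hw : ∀ j, j ≠ k → w j = z j) :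
    2 * ∑ h ∈ s, ∑ m : Fin (G.M (pat h)), Tb G w (pat h) m h
      = ∑ h ∈ s, ∑ m : Fin (G.M (pat h)), Cb G k z (pat h) m h * Pb G k (pat h) m h (w k) := by
  rw [two_mul]
  nth_rewrite 2 [reindex G k s hs w]
  rw [← Finset.sum_add_distrib]
  refine Finset.sum_congr rfl fun h _ => ?_
  rw [← Finset.sum_add_distrib]
  refine Finset.sum_congr rfl fun m _ => ?_
  unfold Tb Cb Pb
  have e1 : ∏ j, stdNormal (w j - sgnVal (h j) * G.mu (pat h) m j)
      = stdNormal (w k - sgnVal (h k) * G.mu (pat h) m k)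
        * ∏ j ∈ Finset.univ.erase k, stdNormal (z j - sgnVal (h j) * G.mu (pat h) m j) := by
    rw [← Finset.mul_prod_erase Finset.univ _ (Finset.mem_univ k)]
    refine congrArg _ (Finset.prod_congr rfl fun j hj => ?_)
    rw [hw j (Finset.ne_of_mem_erase hj)]
  have e2 : ∏ j, stdNormal (w j - sgnVal (Fk k h j) * G.mu (pat h) m j)
      = stdNormal (w k + sgnVal (h k) * G.mu (pat h) m k)
        * ∏ j ∈ Finset.univ.erase k, stdNormal (z j - sgnVal (h j) * G.mu (pat h) m j) := by
    rw [← Finset.mul_prod_erase Finset.univ _ (Finset.mem_univ k)]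
    congr 1
    · rw [Fk_self, sgnVal_flip3]; ring_nf
    · refine Finset.prod_congr rfl fun j hj => ?_
      rw [hw j (Finset.ne_of_mem_erase hj), Fk_ne _ _ (Finset.ne_of_mem_erase hj)]
  rw [e1, e2]; ring

lemma mu_le (G : CsmGmm K) {β β' : Fin K → Bool} (hβ' : β' = fun _ => true)
    (hβ : β ≠ fun _ => true) (m : Fin (G.M β)) (m' : Fin (G.M β')) (k : Fin K)
    (hk : β k = true) : G.mu β m k ≤ G.mu β' m' k := by
  subst hβ'; exact G.mu_alt β m m' k hβ hk

lemma mu_nonneg (G : CsmGmm K) (β : Fin K → Bool) (m : Fin (G.M β)) (k : Fin K) :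
    0 ≤ G.mu β m k := by
  cases hb : β k
  · rw [G.mu_null β m k hb]
  · exact (G.mu_pos β m k hb).le

end Aux

/-- **Theorem 1 (non-decreasing part).** Under any csmGmm, for every dimension `k`
and every choice of the remaining coordinates, the lfdr is non-decreasing in the
`k`-th coordinate on the non-positive half-line. -/
theorem csmGmm_lfdr_nondecreasing_on_nonpos {K : ℕ} (hK : 2 ≤ K) (G : CsmGmm K)
    (k : Fin K) (z z' : Fin K → ℝ)
    (hfix : ∀ k', k' ≠ k → z k' = z' k')
    (hle : z k ≤ z' k) (h0 : z' k ≤ 0) :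
    G.lfdr z ≤ G.lfdr z' := by
  have hKpos : 0 < K := by omega
  have hDpos : ∀ w : Fin K → ℝ, 0 < G.D w := by
    intro w
    unfold CsmGmm.D
    apply Finset.sum_pos
    · intro h _
      have : Nonempty (Fin (G.M (pat h))) := ⟨⟨0, G.M_pos _⟩⟩
      apply Finset.sum_pos
      · intro m _
        exact mul_pos (G.pi_pos _ m) (Finset.prod_pos fun j _ => stdNormal_pos _)
      · exact Finset.univ_nonempty
    · exact Finset.univ_nonempty
  -- the alternative part
  set A : (Fin K → ℝ) → ℝ := fun w =>
    ∑ h ∈ Finset.univ.filter (fun h : Fin K → Fin 3 => ¬ ∃ j, h j = 1),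
      ∑ m : Fin (G.M (pat h)),
        G.pi (pat h) m * ∏ j, stdNormal (w j - sgnVal (h j) * G.mu (pat h) m j)
    with hA
  have hsplit : ∀ w, G.D w = G.N w + A w := by
    intro w
    rw [hA, CsmGmm.D, CsmGmm.N,
      ← Finset.sum_filter_add_sum_filter_not Finset.univ
        (fun h : Fin K → Fin 3 => ∃ j, h j = 1)]
  have core : G.N z * A z' ≤ G.N z' * A z := by
    -- closure of the two index sets under Fk
    have hclN : ∀ h ∈ Finset.univ.filter (fun h : Fin K → Fin 3 => ∃ j, h j = 1),
        Fk k h ∈ Finset.univ.filter (fun h : Fin K → Fin 3 => ∃ j, h j = 1) := by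
      intro h hh
      simp only [Finset.mem_filter, Finset.mem_univ, true_and] at hh ⊢
      exact (exists_one_Fk k h).mpr hh
    have hclA : ∀ h ∈ Finset.univ.filter (fun h : Fin K → Fin 3 => ¬ ∃ j, h j = 1),
        Fk k h ∈ Finset.univ.filter (fun h : Fin K → Fin 3 => ¬ ∃ j, h j = 1) := by
      intro h hh
      simp only [Finset.mem_filter, Finset.mem_univ, true_and] at hh ⊢
      exact fun hc => hh ((exists_one_Fk k h).mp hc)
    have hwz : ∀ j, j ≠ k → z j = z j := fun _ _ => rfl
    have hwz' : ∀ j, j ≠ k → z' j = z j := fun j hj => (hfix j hj).symm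
    have hNz := doubling G k z _ hclN z hwz
    have hNz' := doubling G k z _ hclN z' hwz'
    have hAz := doubling G k z _ hclA z hwz
    have hAz' := doubling G k z _ hclA z' hwz'
    have hN2 : ∀ w, G.N w = ∑ h ∈ Finset.univ.filter (fun h : Fin K → Fin 3 => ∃ j, h j = 1),
        ∑ m : Fin (G.M (pat h)), Tb G w (pat h) m h := fun w => rfl
    have hA2 : ∀ w, A w = ∑ h ∈ Finset.univ.filter (fun h : Fin K → Fin 3 => ¬ ∃ j, h j = 1),
        ∑ m : Fin (G.M (pat h)), Tb G w (pat h) m h := fun w => rfl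
    have key : (2 * G.N z) * (2 * A z') ≤ (2 * G.N z') * (2 * A z) := by
      rw [hN2 z, hN2 z', hA2 z, hA2 z', hNz, hNz', hAz, hAz',
        Finset.sum_mul_sum, Finset.sum_mul_sum]
      refine Finset.sum_le_sum fun h hh => ?_
      refine Finset.sum_le_sum fun g hg => ?_
      rw [Finset.sum_mul_sum, Finset.sum_mul_sum]
      refine Finset.sum_le_sum fun m _ => ?_
      refine Finset.sum_le_sum fun m' _ => ?_
      -- termwise inequality
      simp only [Finset.mem_filter, Finset.mem_univ, true_and] at hh hg
      have hCC : 0 ≤ Cb G k z (pat h) m h * Cb G k z (pat g) m' g :=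
        mul_nonneg (Cb_nonneg G k z _ m h) (Cb_nonneg G k z _ m' g)
      have hg' : ∀ j, g j ≠ 1 := by push_neg at hg; exact hg
      have hpg : pat g = fun _ => true := by
        funext j
        simp only [pat, bne_iff_ne, ne_eq, hg' j, not_false_eq_true]
      have hab : (sgnVal (h k) * G.mu (pat h) m k)^2
          ≤ (sgnVal (g k) * G.mu (pat g) m' k)^2 := by
        have hsg : sgnVal (g k) ^ 2 = 1 := sgnVal_sq_eq_one _ (hg' k)
        rw [mul_pow, mul_pow, hsg, one_mul]
        by_cases hhk : h k = 1
        · rw [hhk, sgnVal_one]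
          nlinarith [sq_nonneg (G.mu (pat g) m' k), sq_nonneg (G.mu (pat h) m k)]
        · have hpat : pat h ≠ fun _ => true := by
            obtain ⟨j, hj⟩ := hh
            intro hc
            have := congrFun hc j
            simp [pat, hj] at this
          have hk1 : pat h k = true := by simp [pat, hhk]
          have hmu : G.mu (pat h) m k ≤ G.mu (pat g) m' k := mu_le G hpg hpat m m' k hk1
          have h1 : sgnVal (h k) ^ 2 ≤ 1 := sgnVal_sq_le_one _
          have h2 : 0 ≤ G.mu (pat h) m k := mu_nonneg G _ m k
          nlinarith [sq_nonneg (G.mu (pat h) m k)]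
      have hkp := keyProd hab hle h0
      calc Cb G k z (pat h) m h * Pb G k (pat h) m h (z k)
            * (Cb G k z (pat g) m' g * Pb G k (pat g) m' g (z' k))
          = (Cb G k z (pat h) m h * Cb G k z (pat g) m' g)
            * (Pb G k (pat h) m h (z k) * Pb G k (pat g) m' g (z' k)) := by ring
        _ ≤ (Cb G k z (pat h) m h * Cb G k z (pat g) m' g)
            * (Pb G k (pat h) m h (z' k) * Pb G k (pat g) m' g (z k)) := by
            exact mul_le_mul_of_nonneg_left hkp hCC
        _ = Cb G k z (pat h) m h * Pb G k (pat h) m h (z' k)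
            * (Cb G k z (pat g) m' g * Pb G k (pat g) m' g (z k)) := by ring
    nlinarith [key]
  rw [CsmGmm.lfdr, CsmGmm.lfdr, div_le_div_iff₀ (hDpos z) (hDpos z')]
  rw [hsplit z, hsplit z']
  nlinarith [core]
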